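/- Let φ be convex univalent on the unit disk (normalized φ(0)=0, φ'(0)=1, Re(1+zφ''(z)/φ'(z)) > 0). Then for all z ∈ 𝔻, |arg φ'(z)| ≤ 2 arcsin(|z|). -/

import Mathlib

open Complex Metric Filter Topology intervalIntegral Real MeasureTheory

/-- If `|w| ≤ s`, `0 ≤ s < 1`, then `|arg (1 - w)| ≤ arcsin s`. -/
lemma arg_one_sub_le {w : ℂ} {s : ℝ} (hs0 : 0 ≤ s) (hs1 : s < 1) (hw : ‖w‖ ≤ s) :
    |Complex.arg (1 - w)| ≤ Real.arcsin s := by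
  set u : ℂ := 1 - w with hu
  have hre : 0 < u.re := by
    have : |w.re| ≤ s := (Complex.abs_re_le_norm w).trans hw
    simp only [hu, Complex.sub_re, Complex.one_re]
    have := abs_le.1 this
    linarith
  have hune : u ≠ 0 := by
    intro h; rw [h] at hre; simp at hre
  have habs : 0 < ‖u‖ := norm_pos_iff.mpr hune
  have harg2 : |Complex.arg u| ≤ Real.pi / 2 :=
    Complex.abs_arg_le_pi_div_two_iff.2 hre.le
  have key : |u.im| ≤ s * ‖u‖ := by
    rw [← Real.sqrt_sq_eq_abs]
    have habs' : ‖u‖ = Real.sqrt (u.re^2 + u.im^2) := by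
      rw [Complex.norm_def, Complex.normSq_apply]; ring_nf
    rw [habs', ← Real.sqrt_mul_self hs0, ← Real.sqrt_mul (mul_self_nonneg s)]
    apply Real.sqrt_le_sqrt
    have him : u.im = -w.im := by simp [hu]
    have hre' : u.re = 1 - w.re := by simp [hu]
    have hw2 : w.re^2 + w.im^2 ≤ s^2 := by
      have h2 : (‖w‖)^2 ≤ s^2 := by nlinarith [norm_nonneg w]
      rw [Complex.sq_norm, Complex.normSq_apply] at h2; nlinarith
    have hy : w.im^2 ≤ s^2 - w.re^2 := by linarith
    have hstep : w.im^2 * (1 - s^2) ≤ (s^2 - w.re^2) * (1 - s^2) :=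
      mul_le_mul_of_nonneg_right hy (by nlinarith)
    rw [him, hre']
    nlinarith [sq_nonneg (w.re - s^2)]
  have hsin : Real.sin |Complex.arg u| ≤ s := by
    have hsa := Complex.sin_arg u
    have himle : |u.im| / ‖u‖ ≤ s := by
      rw [div_le_iff₀ habs]; exact key
    rcases abs_cases (Complex.arg u) with ⟨h1, _⟩ | ⟨h1, _⟩
    · rw [h1, hsa]
      refine le_trans ?_ himle; gcongr; exact le_abs_self _
    · rw [h1, Real.sin_neg, hsa, ← neg_div]
      refine le_trans ?_ himle; gcongr; exact neg_le_abs _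
  calc |Complex.arg u| = Real.arcsin (Real.sin |Complex.arg u|) := by
        rw [Real.arcsin_sin (by linarith [abs_nonneg (Complex.arg u), Real.pi_pos]) harg2]
      _ ≤ Real.arcsin s := Real.monotone_arcsin hsin

lemma aux_ne_zero (f : ℂ → ℂ) (hf : AnalyticOnNhd ℂ f (ball (0:ℂ) 1))
    (hf0 : f 0 = 1)
    (hconv : ∀ z ∈ ball (0:ℂ) 1, (0:ℝ) < (1 + z * deriv f z / f z).re) :
    ∀ z ∈ ball (0:ℂ) 1, f z ≠ 0 := by
  intro z₀ hz₀ hzero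
  have h0mem : (0:ℂ) ∈ ball (0:ℂ) 1 := by simp
  have hz₀ne : z₀ ≠ 0 := by
    rintro rfl; rw [hf0] at hzero; exact one_ne_zero hzero
  have hA : AnalyticAt ℂ f z₀ := hf z₀ hz₀
  have hnot_top : analyticOrderAt f z₀ ≠ ⊤ := by
    intro htop
    rw [analyticOrderAt_eq_top] at htop
    have := hf.eqOn_zero_of_preconnected_of_eventuallyEq_zero
      (convex_ball (0:ℂ) 1).isPreconnected hz₀ htop h0mem
    rw [hf0] at this; exact one_ne_zero this
  obtain ⟨n, hn⟩ : ∃ n : ℕ, analyticOrderAt f z₀ = n := by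
    lift analyticOrderAt f z₀ to ℕ using hnot_top with n hn
    exact ⟨n, rfl⟩
  obtain ⟨g, hg, hgne, hev⟩ := hA.analyticOrderAt_eq_natCast.1 hn
  obtain ⟨m, rfl⟩ : ∃ m, n = m + 1 := by
    cases n with
    | zero =>
        exfalso
        have := hev.self_of_nhds
        simp only [pow_zero, one_smul] at this
        rw [hzero] at this
        exact hgne this.symm
    | succ m => exact ⟨m, rfl⟩
  set c : ℝ := ‖z₀‖ with hc
  have hcpos : 0 < c := norm_pos_iff.mpr hz₀ne
  set e : ℝ → ℂ := fun ε => ((1 - ε / c : ℝ) : ℂ) * z₀ with he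
  have hdiff : ∀ ε : ℝ, e ε - z₀ = -((ε / c : ℝ) : ℂ) * z₀ := by
    intro ε; rw [he]; push_cast; ring
  have htend : Tendsto e (𝓝[>] (0:ℝ)) (𝓝 z₀) := by
    have h1 : Tendsto (fun ε : ℝ => ((1 - ε / c : ℝ) : ℂ) * z₀) (𝓝 0) (𝓝 z₀) := by
      have hcont : Continuous (fun ε : ℝ => ((1 - ε / c : ℝ) : ℂ) * z₀) := by continuity
      have h0 := hcont.tendsto 0
      simpa using h0
    rw [he]; exact h1.mono_left nhdsWithin_le_nhds
  have hIoo : Set.Ioo (0:ℝ) c ∈ 𝓝[>] (0:ℝ) :=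
    Ioo_mem_nhdsGT_of_mem ⟨le_refl _, hcpos⟩
  have hev_ball : ∀ᶠ ε in 𝓝[>] (0:ℝ), e ε ∈ ball (0:ℂ) 1 := by
    filter_upwards [hIoo] with ε hε
    have h1 : ‖e ε‖ = |1 - ε / c| * c := by
      rw [he]; rw [norm_mul, Complex.norm_real, Real.norm_eq_abs]
    have h2 : |1 - ε / c| < 1 := by
      rw [abs_lt]
      constructor
      · have : ε / c < 1 := (div_lt_one hcpos).2 hε.2
        linarith
      · have : 0 < ε / c := div_pos hε.1 hcpos
        linarith
    have h3 : ‖e ε‖ < c := by rw [h1]; nlinarith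
    exact mem_ball_zero_iff.2 (lt_trans h3 (by simpa [hc] using mem_ball_zero_iff.1 hz₀))
  have hev_ne : ∀ᶠ ε in 𝓝[>] (0:ℝ), e ε ≠ z₀ := by
    filter_upwards [hIoo] with ε hε hcontra
    have h4 : -((ε / c : ℝ) : ℂ) * z₀ = 0 := by rw [← hdiff, hcontra, sub_self]
    rcases mul_eq_zero.1 h4 with h | h
    · have : (ε / c : ℝ) = 0 := by
        have := neg_eq_zero.1 h
        exact_mod_cast this
      rcases div_eq_zero_iff.1 this with h' | h'
      · exact absurd h' (ne_of_gt hε.1)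
      · exact absurd h' (ne_of_gt hcpos)
    · exact hz₀ne h
  -- eventual formula for deriv f
  have hfev : ∀ᶠ z in 𝓝 z₀, f z = (z - z₀) ^ (m + 1) * g z := by
    simpa [smul_eq_mul] using hev
  have hgev : ∀ᶠ z in 𝓝 z₀, AnalyticAt ℂ g z := hg.eventually_analyticAt
  have hdev : ∀ᶠ z in 𝓝 z₀,
      deriv f z = ((m:ℂ)+1) * (z - z₀)^m * g z + (z - z₀)^(m+1) * deriv g z := by
    have hEq : f =ᶠ[𝓝 z₀] fun z => (z - z₀) ^ (m + 1) * g z := hfev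
    filter_upwards [hgev, hEq.deriv] with z hgz hdz
    rw [hdz]
    have hp : HasDerivAt (fun z => (z - z₀)^(m+1)) (((m:ℂ)+1) * (z - z₀)^m) z := by
      have := ((hasDerivAt_id z).sub_const z₀).pow (m+1)
      simpa [mul_comm, Pi.pow_def] using this
    have h1 := hp.mul hgz.differentiableAt.hasDerivAt
    exact h1.deriv
  have hgne' : ∀ᶠ z in 𝓝 z₀, g z ≠ 0 := hg.continuousAt.eventually_ne hgne
  -- limits
  set B₀ : ℝ := (z₀ * deriv g z₀ / g z₀).re with hB₀
  have hBtend : Tendsto (fun ε => (e ε * deriv g (e ε) / g (e ε)).re) (𝓝[>] (0:ℝ)) (𝓝 B₀) := by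
    have hca : ContinuousAt (fun z : ℂ => (z * deriv g z / g z).re) z₀ := by
      apply Complex.continuous_re.continuousAt.comp
      have hdg : ContinuousAt (deriv g) z₀ := by
        obtain ⟨U, hU_mem, hU⟩ := Filter.eventually_iff_exists_mem.1 hgev
        obtain ⟨V, hVU, hVopen, hVz⟩ := _root_.mem_nhds_iff.1 hU_mem
        have hAOn : AnalyticOnNhd ℂ g V := fun z hz => hU z (hVU hz)
        exact ((hAOn.deriv) z₀ hVz).continuousAt
      exact (continuousAt_id.mul hdg).div hg.continuousAt hgne
    exact hca.tendsto.comp htend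
  set A : ℝ → ℝ := fun ε => ((m:ℝ)+1) * (c - ε) * ε⁻¹ with hAdef
  have hAtend : Tendsto A (𝓝[>] (0:ℝ)) atTop := by
    apply Filter.Tendsto.pos_mul_atTop (show (0:ℝ) < ((m:ℝ)+1) * c by positivity)
    · have : Tendsto (fun ε : ℝ => ((m:ℝ)+1) * (c - ε)) (𝓝 0) (𝓝 (((m:ℝ)+1) * c)) := by
        have : Continuous (fun ε : ℝ => ((m:ℝ)+1) * (c - ε)) := by continuity
        simpa using this.tendsto 0
      exact this.mono_left nhdsWithin_le_nhds
    · exact tendsto_inv_nhdsGT_zero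
  -- main pointwise identity
  have key : ∀ᶠ ε in 𝓝[>] (0:ℝ),
      (1 + e ε * deriv f (e ε) / f (e ε)).re
        = 1 - A ε + (e ε * deriv g (e ε) / g (e ε)).re := by
    filter_upwards [htend.eventually hfev, htend.eventually hdev, htend.eventually hgne',
      hev_ne, hIoo] with ε h1 h2 h3 h4 h5
    have hd0 : e ε - z₀ ≠ 0 := sub_ne_zero.2 h4
    have hεne : (ε:ℂ) ≠ 0 := by exact_mod_cast ne_of_gt h5.1
    have hcne : (c:ℂ) ≠ 0 := by exact_mod_cast ne_of_gt hcpos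
    have step1 : e ε * deriv f (e ε) / f (e ε)
        = ((m:ℂ)+1) * e ε / (e ε - z₀) + e ε * deriv g (e ε) / g (e ε) := by
      rw [h1, h2]
      set w := e ε
      set d := w - z₀ with hdd
      set G := g w
      set G' := deriv g w
      have hPne : d ^ m ≠ 0 := pow_ne_zero _ hd0
      rw [pow_succ]
      field_simp
    have step2 : ((m:ℂ)+1) * e ε / (e ε - z₀)
        = (-(((m:ℝ)+1) * (c - ε) * ε⁻¹ : ℝ) : ℂ) := by
      rw [hdiff ε]
      have hee : e ε = ((1 - ε / c : ℝ) : ℂ) * z₀ := by rw [he]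
      rw [hee]
      push_cast
      field_simp
    have hmain : (1 : ℂ) + e ε * deriv f (e ε) / f (e ε)
        = 1 + (-(((m:ℝ)+1) * (c - ε) * ε⁻¹ : ℝ) : ℂ) + e ε * deriv g (e ε) / g (e ε) := by
      rw [step1, step2]; ring
    rw [hmain]
    simp only [Complex.add_re, Complex.one_re, Complex.neg_re, Complex.ofReal_re, hAdef]
    ring
  -- contradiction
  have hconv' : ∀ᶠ ε in 𝓝[>] (0:ℝ), (0:ℝ) < (1 + e ε * deriv f (e ε) / f (e ε)).re := by
    filter_upwards [hev_ball] with ε hball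
    exact hconv _ hball
  have hA' : ∀ᶠ ε in 𝓝[>] (0:ℝ), B₀ + 2 ≤ A ε := hAtend.eventually_ge_atTop _
  have hB' : ∀ᶠ ε in 𝓝[>] (0:ℝ), (e ε * deriv g (e ε) / g (e ε)).re ≤ B₀ + 1 :=
    hBtend.eventually (eventually_le_nhds (by linarith))
  obtain ⟨ε, h1, h2, h3, h4⟩ := (hconv'.and (key.and (hA'.and hB'))).exists
  rw [h2] at h1
  linarith

lemma aux_exp_eq (f : ℂ → ℂ) (hfa : AnalyticOnNhd ℂ f (ball (0:ℂ) 1)) (hf0 : f 0 = 1)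
    (hne : ∀ z ∈ ball (0:ℂ) 1, f z ≠ 0) {z : ℂ} (hz : z ∈ ball (0:ℂ) 1) :
    Complex.exp (∫ t in (0:ℝ)..1, z * deriv f ((t:ℂ)*z) / f ((t:ℂ)*z)) = f z := by
  rcases eq_or_ne z 0 with rfl | hzne
  · simp [hf0]
  set K := ‖z‖ with hK
  have hK0 : 0 < K := norm_pos_iff.mpr hzne
  have hK1 : K < 1 := mem_ball_zero_iff.1 hz
  set δ : ℝ := (1 - K) / (2 * K) with hδ
  have hδ0 : 0 < δ := div_pos (by linarith) (by positivity)
  have hδK : (1 + δ) * K < 1 := by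
    have heq : (1 + δ) * K = K + (1 - K) / 2 := by
      rw [hδ]; field_simp
    rw [heq]; linarith
  set I : Set ℝ := Set.Ioo (-δ) (1 + δ) with hI
  have hIopen : IsOpen I := isOpen_Ioo
  have hmem : ∀ t ∈ I, ((t:ℂ) * z) ∈ ball (0:ℂ) 1 := by
    intro t ht
    rw [mem_ball_zero_iff, norm_mul, Complex.norm_real, Real.norm_eq_abs]
    have h1 : |t| < 1 + δ := by
      rw [abs_lt]; exact ⟨by linarith [ht.1, hδ0], by linarith [ht.2]⟩
    calc |t| * K < (1 + δ) * K := by exact mul_lt_mul_of_pos_right h1 hK0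
      _ < 1 := hδK
  have hIcc : Set.Icc (0:ℝ) 1 ⊆ I := fun t ht => ⟨by linarith [ht.1], by linarith [ht.2]⟩
  -- integrand
  set u : ℝ → ℂ := fun t => z * deriv f ((t:ℂ)*z) / f ((t:ℂ)*z) with hu
  have hucont : ∀ t ∈ I, ContinuousAt u t := by
    intro t ht
    have hmapt : ContinuousAt (fun s : ℝ => (s:ℂ)*z) t := by fun_prop
    have h1 : ContinuousAt (deriv f) ((t:ℂ)*z) := ((hfa.deriv) _ (hmem t ht)).continuousAt
    have h2 : ContinuousAt f ((t:ℂ)*z) := (hfa _ (hmem t ht)).continuousAt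
    have h1' : ContinuousAt (fun s : ℝ => deriv f ((s:ℂ)*z)) t := ContinuousAt.comp (f := fun s : ℝ => (s:ℂ)*z) h1 hmapt
    have h2' : ContinuousAt (fun s : ℝ => f ((s:ℂ)*z)) t := ContinuousAt.comp (f := fun s : ℝ => (s:ℂ)*z) h2 hmapt
    exact (continuousAt_const.mul h1').div h2' (hne _ (hmem t ht))
  have huI : ContinuousOn u I := fun t ht => (hucont t ht).continuousWithinAt
  set M : ℝ → ℂ := fun t => ∫ s in (0:ℝ)..t, u s with hM
  have hMderiv : ∀ t ∈ I, HasDerivAt M (u t) t := by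
    intro t ht
    apply intervalIntegral.integral_hasDerivAt_right
    · apply ContinuousOn.intervalIntegrable
      apply huI.mono
      intro s hs
      rcases le_total 0 t with h | h
      · rw [Set.uIcc_of_le h] at hs
        exact ⟨by linarith [hs.1, hδ0], by linarith [hs.2, ht.2]⟩
      · rw [Set.uIcc_of_ge h] at hs
        exact ⟨by linarith [hs.1, ht.1], by linarith [hs.2, hδ0]⟩
    · exact (huI.stronglyMeasurableAtFilter hIopen t ht)
    · exact hucont t ht
  set H : ℝ → ℂ := fun t => f ((t:ℂ)*z) * Complex.exp (-M t) with hH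
  have hHderiv : ∀ t ∈ I, HasDerivAt H 0 t := by
    intro t ht
    have hfd : HasDerivAt f (deriv f ((t:ℂ)*z)) ((t:ℂ)*z) :=
      ((hfa _ (hmem t ht)).differentiableAt).hasDerivAt
    have hinner : HasDerivAt (fun w : ℂ => w * z) z (t:ℂ) := by
      simpa using (hasDerivAt_id ((t:ℂ))).mul_const z
    have hcomp : HasDerivAt (fun w : ℂ => f (w * z)) (deriv f ((t:ℂ)*z) * z) (t:ℂ) :=
      HasDerivAt.comp _ hfd hinner
    have h1 : HasDerivAt (fun s : ℝ => f ((s:ℂ)*z)) (deriv f ((t:ℂ)*z) * z) t :=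
      hcomp.comp_ofReal
    have h2 : HasDerivAt (fun s : ℝ => Complex.exp (-M s))
        (Complex.exp (-M t) * (-u t)) t := ((hMderiv t ht).neg).cexp
    have h3 := h1.mul h2
    have hval : deriv f ((t:ℂ)*z) * z * Complex.exp (-M t)
        + f ((t:ℂ)*z) * (Complex.exp (-M t) * (-u t)) = 0 := by
      rw [hu]
      have hfne : f ((t:ℂ)*z) ≠ 0 := hne _ (hmem t ht)
      field_simp
      ring
    rw [hval] at h3
    exact h3
  have hconst := constant_of_has_deriv_right_zero
    (f := H) (a := 0) (b := 1)
    (fun t ht => ((hHderiv t (hIcc ht)).continuousAt).continuousWithinAt)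
    (fun t ht => ((hHderiv t (hIcc ⟨ht.1, ht.2.le⟩)).hasDerivWithinAt))
  have h10 := hconst 1 (by norm_num)
  have hH0 : H 0 = 1 := by
    simp [hH, hM, hf0, intervalIntegral.integral_same]
  have hH1 : H 1 = f z * Complex.exp (-M 1) := by simp [hH]
  rw [hH1, hH0] at h10
  have : f z = Complex.exp (M 1) := by
    have hexp := Complex.exp_ne_zero (-M 1)
    rw [Complex.exp_neg, ← div_eq_mul_inv, div_eq_one_iff_eq (Complex.exp_ne_zero _)] at h10
    linear_combination h10
  rw [this, hM]

/-- Cauchy formula on a circle, in interval-integral form. -/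
lemma aux_cauchy {R : ℝ} (hR0 : 0 < R) (F : ℂ → ℂ) (hF : DiffContOnCl ℂ F (ball (0:ℂ) R))
    {v : ℂ} (hv : v ∈ ball (0:ℂ) R) :
    ∫ s in (0:ℝ)..(2*π), circleMap 0 R s / (circleMap 0 R s - v) * F (circleMap 0 R s)
      = 2*π*F v := by
  have h := hF.circleIntegral_sub_inv_smul hv
  rw [circleIntegral] at h
  simp only [deriv_circleMap, smul_eq_mul] at h
  have h2 : ∫ s in (0:ℝ)..(2*π),
      I * (circleMap 0 R s / (circleMap 0 R s - v) * F (circleMap 0 R s))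
      = 2*π*I*F v := by
    rw [← h]
    apply intervalIntegral.integral_congr
    intro s _
    simp only [div_eq_mul_inv]
    ring
  rw [intervalIntegral.integral_const_mul] at h2
  apply mul_left_cancel₀ Complex.I_ne_zero
  rw [h2]; ring

/-- Schwarz–Poisson formula, difference form. -/
lemma aux_poisson (p : ℂ → ℂ) (hp : DifferentiableOn ℂ p (ball (0:ℂ) 1)) (hp0 : p 0 = 1)
    {R : ℝ} (hR0 : 0 < R) (hR1 : R < 1) {w : ℂ} (hw : ‖w‖ < R) :
    ∫ s in (0:ℝ)..(2*π), ((p (circleMap 0 R s)).re : ℂ) * (2*w/(circleMap 0 R s - w))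
      = 2*π*(p w - 1) := by
  have h2π : (0:ℝ) ≤ 2*π := by positivity
  have hwR : w ∈ ball (0:ℂ) R := by
    rw [mem_ball_zero_iff]; exact hw
  have hsub : closure (ball (0:ℂ) R) ⊆ ball (0:ℂ) 1 := by
    rw [closure_ball 0 hR0.ne']
    exact closedBall_subset_ball hR1
  have hpD : DiffContOnCl ℂ p (ball (0:ℂ) R) :=
    DifferentiableOn.diffContOnCl (hp.mono hsub)
  have habsζ : ∀ s : ℝ, ‖circleMap 0 R s‖ = R := by
    intro s; simp [norm_circleMap_zero, abs_of_pos hR0]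
  have hζ_ball : ∀ s : ℝ, circleMap 0 R s ∈ ball (0:ℂ) 1 := by
    intro s
    rw [mem_ball_zero_iff, habsζ s]; exact hR1
  have hζw : ∀ s : ℝ, circleMap 0 R s - w ≠ 0 := by
    intro s
    apply sub_ne_zero.2
    intro hcontra
    rw [← hcontra, habsζ s] at hw
    exact lt_irrefl _ hw
  have hcontp : Continuous fun s : ℝ => p (circleMap 0 R s) :=
    hp.continuousOn.comp_continuous (continuous_circleMap 0 R) hζ_ball
  have hcontζ : Continuous fun s : ℝ => circleMap 0 R s := continuous_circleMap 0 R
  have hmean : ∫ s in (0:ℝ)..(2*π), p (circleMap 0 R s) = 2*π := by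
    have h := aux_cauchy hR0 p hpD (v := 0) (by simpa [mem_ball_zero_iff] using hR0)
    rw [hp0, mul_one] at h
    refine Eq.trans ?_ h
    apply intervalIntegral.integral_congr
    intro s _
    have hne : circleMap 0 R s ≠ 0 := circleMap_ne_center hR0.ne'
    show p (circleMap 0 R s) = circleMap 0 R s / (circleMap 0 R s - 0) * p (circleMap 0 R s)
    rw [sub_zero, div_self hne, one_mul]
  set q : ℂ → ℂ := fun ζ =>
    p ζ * ((starRingEnd ℂ) w * ζ / ((R:ℂ)^2 - (starRingEnd ℂ) w * ζ)) with hq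
  have hqD : DiffContOnCl ℂ q (ball (0:ℂ) R) := by
    apply DifferentiableOn.diffContOnCl
    rw [closure_ball 0 hR0.ne']
    apply DifferentiableOn.mul
    · exact hp.mono (closedBall_subset_ball hR1)
    · apply DifferentiableOn.div
      · exact (differentiableOn_id).const_mul _
      · exact ((differentiableOn_id).const_mul _).const_sub _
      · intro ζ hζ
        have hζR : ‖ζ‖ ≤ R := by
          rwa [mem_closedBall_zero_iff] at hζ
        apply sub_ne_zero.2
        intro hcontra
        have h1 : ‖(starRingEnd ℂ) w * ζ‖ ≤ ‖w‖ * R := by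
          rw [norm_mul, Complex.norm_conj]
          exact mul_le_mul_of_nonneg_left hζR (norm_nonneg w)
        have h2 : ‖(R:ℂ)^2‖ = R^2 := by
          rw [norm_pow, Complex.norm_real, Real.norm_eq_abs, abs_of_pos hR0]
        rw [← hcontra, h2] at h1
        nlinarith [norm_nonneg w]
  have hq0 : ∫ s in (0:ℝ)..(2*π), q (circleMap 0 R s) = 0 := by
    have h := aux_cauchy hR0 q hqD (v := 0) (by simpa [mem_ball_zero_iff] using hR0)
    have hq00 : q 0 = 0 := by simp [hq]
    rw [hq00, mul_zero] at h
    refine Eq.trans ?_ h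
    apply intervalIntegral.integral_congr
    intro s _
    have hne : circleMap 0 R s ≠ 0 := circleMap_ne_center hR0.ne'
    show q (circleMap 0 R s) = circleMap 0 R s / (circleMap 0 R s - 0) * q (circleMap 0 R s)
    rw [sub_zero, div_self hne, one_mul]
  have hb : ∫ s in (0:ℝ)..(2*π),
      (starRingEnd ℂ) (p (circleMap 0 R s)) * (w/(circleMap 0 R s - w)) = 0 := by
    have hptw : ∀ s : ℝ, (starRingEnd ℂ) (q (circleMap 0 R s))
        = (starRingEnd ℂ) (p (circleMap 0 R s)) * (w/(circleMap 0 R s - w)) := by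
      intro s
      set ζ := circleMap 0 R s with hζdef
      have hζζ : ζ * (starRingEnd ℂ) ζ = ((R:ℂ))^2 := by
        rw [Complex.mul_conj, Complex.normSq_eq_norm_sq, habsζ s]
        push_cast; ring
      have hd1 : (R:ℂ)^2 - w * (starRingEnd ℂ) ζ ≠ 0 := by
        apply sub_ne_zero.2
        intro hcontra
        have h1 : ‖w * (starRingEnd ℂ) ζ‖ = ‖w‖ * R := by
          rw [norm_mul, Complex.norm_conj, habsζ s]
        have h2 : ‖(R:ℂ)^2‖ = R^2 := by
          rw [norm_pow, Complex.norm_real, Real.norm_eq_abs, abs_of_pos hR0]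
        rw [← hcontra, h2] at h1
        nlinarith [norm_nonneg w]
      rw [hq]
      simp only [map_mul, map_div₀, map_sub, map_pow, Complex.conj_conj, Complex.conj_ofReal]
      congr 1
      rw [div_eq_div_iff hd1 (hζw s)]
      linear_combination w * hζζ
    have hswap : (∫ s in (0:ℝ)..(2*π),
        (starRingEnd ℂ) (p (circleMap 0 R s)) * (w/(circleMap 0 R s - w)))
        = ∫ s in (0:ℝ)..(2*π), (starRingEnd ℂ) (q (circleMap 0 R s)) := by
      apply intervalIntegral.integral_congr
      intro s _
      exact (hptw s).symm
    rw [hswap]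
    rw [intervalIntegral.integral_of_le h2π, integral_conj]
    rw [← intervalIntegral.integral_of_le h2π, hq0, map_zero]
  -- assemble
  have key : ∀ s : ℝ, ((p (circleMap 0 R s)).re : ℂ) * (2*w/(circleMap 0 R s - w))
      = circleMap 0 R s / (circleMap 0 R s - w) * p (circleMap 0 R s)
        + (starRingEnd ℂ) (p (circleMap 0 R s)) * (w/(circleMap 0 R s - w))
        - p (circleMap 0 R s) := by
    intro s
    set ζ := circleMap 0 R s
    set P := p ζ
    have hre : (P.re : ℂ) = (P + (starRingEnd ℂ) P)/2 := by
      rw [Complex.add_conj]; push_cast; ring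
    have hne : ζ - w ≠ 0 := hζw s
    rw [hre]
    field_simp [hne]
    ring
  have hiA : IntervalIntegrable
      (fun s => circleMap 0 R s / (circleMap 0 R s - w) * p (circleMap 0 R s))
      MeasureTheory.volume 0 (2*π) :=
    ((hcontζ.div (hcontζ.sub continuous_const) hζw).mul hcontp).intervalIntegrable _ _
  have hiB : IntervalIntegrable
      (fun s => (starRingEnd ℂ) (p (circleMap 0 R s)) * (w/(circleMap 0 R s - w)))
      MeasureTheory.volume 0 (2*π) :=
    ((Complex.continuous_conj.comp hcontp).mul
      (continuous_const.div (hcontζ.sub continuous_const) hζw)).intervalIntegrable _ _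
  have hiC : IntervalIntegrable (fun s => p (circleMap 0 R s))
      MeasureTheory.volume 0 (2*π) := hcontp.intervalIntegrable _ _
  calc ∫ s in (0:ℝ)..(2*π), ((p (circleMap 0 R s)).re : ℂ) * (2*w/(circleMap 0 R s - w))
      = ∫ s in (0:ℝ)..(2*π),
        (circleMap 0 R s / (circleMap 0 R s - w) * p (circleMap 0 R s)
        + (starRingEnd ℂ) (p (circleMap 0 R s)) * (w/(circleMap 0 R s - w))
        - p (circleMap 0 R s)) := by
        apply intervalIntegral.integral_congr
        intro s _
        exact key s
    _ = (∫ s in (0:ℝ)..(2*π), circleMap 0 R s / (circleMap 0 R s - w) * p (circleMap 0 R s))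
        + (∫ s in (0:ℝ)..(2*π), (starRingEnd ℂ) (p (circleMap 0 R s)) * (w/(circleMap 0 R s - w)))
        - ∫ s in (0:ℝ)..(2*π), p (circleMap 0 R s) := by
        rw [intervalIntegral.integral_sub (hiA.add hiB) hiC,
          intervalIntegral.integral_add hiA hiB]
    _ = 2*π*p w + 0 - 2*π := by
        rw [aux_cauchy hR0 p hpD hwR, hb, hmean]
    _ = 2*π*(p w - 1) := by ring

/-- Key bound on the imaginary part. -/
lemma aux_im_bound (p : ℂ → ℂ) (hp : DifferentiableOn ℂ p (ball (0:ℂ) 1)) (hp0 : p 0 = 1)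
    (hre : ∀ ζ ∈ ball (0:ℂ) 1, 0 ≤ (p ζ).re) {z : ℂ} {R : ℝ}
    (hR1 : R < 1) (hzR : ‖z‖ < R) :
    |(∫ t in (0:ℝ)..1, (p ((t:ℂ)*z) - 1) / (t:ℂ)).im|
      ≤ 2 * Real.arcsin (‖z‖ / R) := by
  have hR0 : 0 < R := lt_of_le_of_lt (norm_nonneg z) hzR
  have h2π : (0:ℝ) ≤ 2*π := by positivity
  have hπ : (0:ℝ) < 2*π := by positivity
  have habsζ : ∀ s : ℝ, ‖circleMap 0 R s‖ = R := by
    intro s; simp [norm_circleMap_zero, abs_of_pos hR0]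
  have hζ0 : ∀ s : ℝ, circleMap 0 R s ≠ 0 := fun s => circleMap_ne_center hR0.ne'
  have hζ_ball : ∀ s : ℝ, circleMap 0 R s ∈ ball (0:ℂ) 1 := by
    intro s; rw [mem_ball_zero_iff, habsζ s]; exact hR1
  have hζtz : ∀ (s t : ℝ), |t| ≤ 1 → circleMap 0 R s - (t:ℂ)*z ≠ 0 := by
    intro s t ht
    apply sub_ne_zero.2
    intro hcontra
    have : ‖(t:ℂ)*z‖ ≤ ‖z‖ := by
      rw [norm_mul, Complex.norm_real, Real.norm_eq_abs]
      calc |t| * ‖z‖ ≤ 1 * ‖z‖ :=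
            mul_le_mul_of_nonneg_right ht (norm_nonneg z)
        _ = ‖z‖ := one_mul _
    rw [← hcontra, habsζ s] at this
    linarith
  have hcontp : Continuous fun s : ℝ => p (circleMap 0 R s) :=
    hp.continuousOn.comp_continuous (continuous_circleMap 0 R) hζ_ball
  have hcontρ : Continuous fun s : ℝ => (p (circleMap 0 R s)).re :=
    Complex.continuous_re.comp hcontp
  set ρ : ℝ → ℝ := fun s => (p (circleMap 0 R s)).re with hρ
  have hρpos : ∀ s : ℝ, 0 ≤ ρ s := fun s => hre _ (hζ_ball s)
  -- mass
  have hsub : closure (ball (0:ℂ) R) ⊆ ball (0:ℂ) 1 := by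
    rw [closure_ball 0 hR0.ne']; exact closedBall_subset_ball hR1
  have hpD : DiffContOnCl ℂ p (ball (0:ℂ) R) := DifferentiableOn.diffContOnCl (hp.mono hsub)
  have hmean : ∫ s in (0:ℝ)..(2*π), p (circleMap 0 R s) = 2*π := by
    have h := aux_cauchy hR0 p hpD (v := 0) (by simpa [mem_ball_zero_iff] using hR0)
    rw [hp0, mul_one] at h
    refine Eq.trans ?_ h
    apply intervalIntegral.integral_congr
    intro s _
    show p (circleMap 0 R s) = circleMap 0 R s / (circleMap 0 R s - 0) * p (circleMap 0 R s)
    rw [sub_zero, div_self (hζ0 s), one_mul]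
  have hmass : ∫ s in (0:ℝ)..(2*π), ρ s = 2*π := by
    have h := Complex.reCLM.intervalIntegral_comp_comm (μ := MeasureTheory.volume) (hcontp.intervalIntegrable 0 (2*π))
    have h2 : ∫ s in (0:ℝ)..(2*π), (p (circleMap 0 R s)).re
        = ((∫ s in (0:ℝ)..(2*π), p (circleMap 0 R s))).re := by
      simpa using h
    rw [hρ]
    rw [h2, hmean]
    simp
  -- notation
  set F : ℝ → ℝ → ℂ := fun t s => ((ρ s : ℝ) : ℂ) * (2*z/(circleMap 0 R s - (t:ℂ)*z)) with hF
  set c : ℝ := ‖z‖ / R with hc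
  have hc0 : 0 ≤ c := by positivity
  have hc1 : c < 1 := (div_lt_one hR0).2 hzR
  have habszζ : ∀ s : ℝ, ‖z / circleMap 0 R s‖ = c := by
    intro s; rw [norm_div, habsζ s, hc]
  have hslit : ∀ s : ℝ, 0 < (1 - z / circleMap 0 R s).re := by
    intro s
    have h1 : |(z / circleMap 0 R s).re| ≤ ‖z / circleMap 0 R s‖ :=
      Complex.abs_re_le_norm _
    rw [habszζ s] at h1
    have := abs_le.1 h1
    simp only [Complex.sub_re, Complex.one_re]
    linarith
  -- Step B : rewrite L
  have hpt : ∀ t ∈ Set.Ioc (0:ℝ) 1, (p ((t:ℂ)*z) - 1) / (t:ℂ)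
      = ((2*π:ℝ):ℂ)⁻¹ * ∫ s in (0:ℝ)..(2*π), F t s := by
    intro t ht
    have htabs : ‖(t:ℂ)*z‖ < R := by
      rw [norm_mul, Complex.norm_real, Real.norm_eq_abs]
      calc |t| * ‖z‖ ≤ 1 * ‖z‖ := by
            apply mul_le_mul_of_nonneg_right _ (norm_nonneg z)
            rw [abs_le]; exact ⟨by linarith [ht.1], ht.2⟩
        _ = ‖z‖ := one_mul _
        _ < R := hzR
    have hpo := aux_poisson p hp hp0 hR0 hR1 htabs
    have hpull : (∫ s in (0:ℝ)..(2*π),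
        ((p (circleMap 0 R s)).re : ℂ) * (2*((t:ℂ)*z)/(circleMap 0 R s - (t:ℂ)*z)))
        = (t:ℂ) * ∫ s in (0:ℝ)..(2*π), F t s := by
      rw [← intervalIntegral.integral_const_mul]
      apply intervalIntegral.integral_congr
      intro s _
      show ((ρ s : ℝ):ℂ) * (2*((t:ℂ)*z)/(circleMap 0 R s - (t:ℂ)*z)) = (t:ℂ) * F t s
      rw [hF]
      ring
    rw [hpull] at hpo
    have htne : (t:ℂ) ≠ 0 := by exact_mod_cast ne_of_gt ht.1
    have hπne : ((2*π:ℝ):ℂ) ≠ 0 := by exact_mod_cast ne_of_gt hπ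
    rw [eq_comm, inv_mul_eq_div, div_eq_div_iff hπne htne]
    push_cast
    linear_combination hpo
  have hB : (∫ t in (0:ℝ)..1, (p ((t:ℂ)*z) - 1) / (t:ℂ))
      = ((2*π:ℝ):ℂ)⁻¹ * ∫ t in (0:ℝ)..1, (∫ s in (0:ℝ)..(2*π), F t s) := by
    rw [← intervalIntegral.integral_const_mul]
    rw [intervalIntegral.integral_of_le zero_le_one, intervalIntegral.integral_of_le zero_le_one]
    exact MeasureTheory.setIntegral_congr_fun measurableSet_Ioc hpt
  -- Step C : Fubini
  have hFcont : ContinuousOn (fun q : ℝ × ℝ => F q.1 q.2)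
      ((Set.Icc (0:ℝ) 1) ×ˢ (Set.Icc (0:ℝ) (2*π))) := by
    apply ContinuousOn.mul
    · exact (Complex.continuous_ofReal.comp (hcontρ.comp continuous_snd)).continuousOn
    · apply ContinuousOn.div continuousOn_const
      · exact (((continuous_circleMap 0 R).comp continuous_snd).sub
          ((Complex.continuous_ofReal.comp continuous_fst).mul continuous_const)).continuousOn
      · rintro ⟨t, s⟩ hq
        exact hζtz s t (abs_le.2 ⟨by linarith [hq.1.1], hq.1.2⟩)
  have hFint : MeasureTheory.IntegrableOn (fun q : ℝ × ℝ => F q.1 q.2)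
      ((Set.Ioc (0:ℝ) 1) ×ˢ (Set.Ioc (0:ℝ) (2*π)))
      (MeasureTheory.volume.prod MeasureTheory.volume) := by
    rw [← MeasureTheory.Measure.volume_eq_prod]
    exact (hFcont.integrableOn_compact (isCompact_Icc.prod isCompact_Icc)).mono_set
      (Set.prod_mono Set.Ioc_subset_Icc_self Set.Ioc_subset_Icc_self)
  have hswap : (∫ t in Set.Ioc (0:ℝ) 1, (∫ s in Set.Ioc (0:ℝ) (2*π), F t s))
      = ∫ s in Set.Ioc (0:ℝ) (2*π), (∫ t in Set.Ioc (0:ℝ) 1, F t s) := by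
    apply MeasureTheory.integral_integral_swap
    rw [MeasureTheory.Measure.prod_restrict]
    exact hFint
  -- Step D : inner FTC
  have hD : ∀ s : ℝ, (∫ t in (0:ℝ)..1, F t s)
      = ((ρ s : ℝ):ℂ) * (-2 * Complex.log (1 - z / circleMap 0 R s)) := by
    intro s
    have hζne : circleMap 0 R s ≠ 0 := hζ0 s
    have hderiv : ∀ t ∈ Set.uIcc (0:ℝ) 1,
        HasDerivAt (fun t : ℝ => (-2 : ℂ) * Complex.log (1 - (t:ℂ)*(z/circleMap 0 R s)))
          (2*z/(circleMap 0 R s - (t:ℂ)*z)) t := by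
      intro t ht
      rw [Set.uIcc_of_le zero_le_one] at ht
      have htle : |t| ≤ 1 := abs_le.2 ⟨by linarith [ht.1], ht.2⟩
      have habs : ‖(t:ℂ)*(z/circleMap 0 R s)‖ < 1 := by
        rw [norm_mul, Complex.norm_real, Real.norm_eq_abs, habszζ s]
        calc |t| * c ≤ 1 * c := mul_le_mul_of_nonneg_right htle hc0
          _ = c := one_mul c
          _ < 1 := hc1
      have hre' : 0 < (1 - (t:ℂ)*(z/circleMap 0 R s)).re := by
        have h1 : |((t:ℂ)*(z/circleMap 0 R s)).re| ≤
            ‖(t:ℂ)*(z/circleMap 0 R s)‖ := Complex.abs_re_le_norm _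
        simp only [Complex.sub_re, Complex.one_re]
        have := abs_le.1 h1
        linarith
      have hinner : HasDerivAt (fun t : ℝ => 1 - (t:ℂ)*(z/circleMap 0 R s))
          (-(z/circleMap 0 R s)) t := by
        have hcx : HasDerivAt (fun w : ℂ => 1 - w*(z/circleMap 0 R s))
            (-(z/circleMap 0 R s)) (t:ℂ) := by
          simpa using ((hasDerivAt_id ((t:ℂ))).mul_const (z/circleMap 0 R s)).const_sub 1
        exact hcx.comp_ofReal
      have hlog1 := hinner.clog_real (Or.inl hre')
      have h2 := hlog1.const_mul (-2 : ℂ)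
      convert h2 using 1
      rfl
      have hd1 : (1 : ℂ) - (t:ℂ)*(z/circleMap 0 R s) ≠ 0 := by
        intro hc0'
        rw [hc0'] at hre'
        simp at hre'
      have hd2 : circleMap 0 R s - (t:ℂ)*z ≠ 0 := hζtz s t htle
      field_simp
    have hcont2 : ContinuousOn (fun t : ℝ => 2*z/(circleMap 0 R s - (t:ℂ)*z))
        (Set.uIcc (0:ℝ) 1) := by
      apply ContinuousOn.div continuousOn_const
      · exact (continuous_const.sub (Complex.continuous_ofReal.mul continuous_const)).continuousOn
      · intro t ht
        rw [Set.uIcc_of_le zero_le_one] at ht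
        exact hζtz s t (abs_le.2 ⟨by linarith [ht.1], ht.2⟩)
    have hFTC := intervalIntegral.integral_eq_sub_of_hasDerivAt hderiv
      (hcont2.intervalIntegrable)
    have hinnerint : (∫ t in (0:ℝ)..1, 2*z/(circleMap 0 R s - (t:ℂ)*z))
        = -2 * Complex.log (1 - z / circleMap 0 R s) := by
      rw [hFTC]
      simp [Complex.log_one]
    rw [hF]
    simp only
    rw [intervalIntegral.integral_const_mul, hinnerint]
  -- putting B, C, D together
  have hL : (∫ t in (0:ℝ)..1, (p ((t:ℂ)*z) - 1) / (t:ℂ))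
      = ((2*π:ℝ):ℂ)⁻¹ * ∫ s in (0:ℝ)..(2*π),
          ((ρ s : ℝ):ℂ) * (-2 * Complex.log (1 - z / circleMap 0 R s)) := by
    rw [hB]
    congr 1
    rw [intervalIntegral.integral_of_le zero_le_one, intervalIntegral.integral_of_le h2π]
    calc (∫ t in Set.Ioc (0:ℝ) 1, (∫ s in (0:ℝ)..(2*π), F t s))
        = ∫ t in Set.Ioc (0:ℝ) 1, (∫ s in Set.Ioc (0:ℝ) (2*π), F t s) := by
          apply MeasureTheory.setIntegral_congr_fun measurableSet_Ioc
          intro t _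
          exact intervalIntegral.integral_of_le h2π
      _ = ∫ s in Set.Ioc (0:ℝ) (2*π), (∫ t in Set.Ioc (0:ℝ) 1, F t s) := hswap
      _ = ∫ s in Set.Ioc (0:ℝ) (2*π),
            ((ρ s : ℝ):ℂ) * (-2 * Complex.log (1 - z / circleMap 0 R s)) := by
          apply MeasureTheory.setIntegral_congr_fun measurableSet_Ioc
          intro s _
          exact (intervalIntegral.integral_of_le zero_le_one).symm.trans (hD s)
  -- Step E : imaginary parts
  have hlogcont : Continuous fun s : ℝ => Complex.log (1 - z / circleMap 0 R s) := by
    rw [continuous_iff_continuousAt]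
    intro s
    apply ContinuousAt.clog
    · exact (continuous_const.sub
        (continuous_const.div (continuous_circleMap 0 R) hζ0)).continuousAt
    · exact Or.inl (hslit s)
  have hargcont : Continuous fun s : ℝ => Complex.arg (1 - z / circleMap 0 R s) := by
    rw [continuous_iff_continuousAt]
    intro s
    exact ContinuousAt.comp (f := fun s : ℝ => 1 - z / circleMap 0 R s)
      (Complex.continuousAt_arg (Or.inl (hslit s)))
      ((continuous_const.sub
        (continuous_const.div (continuous_circleMap 0 R) hζ0)).continuousAt)
  have hintegrand_cont : Continuous fun s : ℝ =>
      ((ρ s : ℝ):ℂ) * (-2 * Complex.log (1 - z / circleMap 0 R s)) :=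
    (Complex.continuous_ofReal.comp hcontρ).mul (continuous_const.mul hlogcont)
  have hXim : (∫ s in (0:ℝ)..(2*π),
      ((ρ s : ℝ):ℂ) * (-2 * Complex.log (1 - z / circleMap 0 R s))).im
      = ∫ s in (0:ℝ)..(2*π), ρ s * (-2 * Complex.arg (1 - z / circleMap 0 R s)) := by
    have h := Complex.imCLM.intervalIntegral_comp_comm (μ := MeasureTheory.volume)
      (hintegrand_cont.intervalIntegrable 0 (2*π))
    have h2 : (∫ s in (0:ℝ)..(2*π),
        (((ρ s : ℝ):ℂ) * (-2 * Complex.log (1 - z / circleMap 0 R s))).im)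
        = (∫ s in (0:ℝ)..(2*π),
          ((ρ s : ℝ):ℂ) * (-2 * Complex.log (1 - z / circleMap 0 R s))).im := by
      simpa using h
    rw [← h2]
    apply intervalIntegral.integral_congr
    intro s _
    show (((ρ s : ℝ):ℂ) * (-2 * Complex.log (1 - z / circleMap 0 R s))).im
      = ρ s * (-2 * Complex.arg (1 - z / circleMap 0 R s))
    rw [Complex.im_ofReal_mul]
    congr 1
    have : ((-2 : ℂ) * Complex.log (1 - z / circleMap 0 R s)).im
        = -2 * (Complex.log (1 - z / circleMap 0 R s)).im := by
      simp [Complex.mul_im]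
    rw [this, Complex.log_im]
  have hLim : (∫ t in (0:ℝ)..1, (p ((t:ℂ)*z) - 1) / (t:ℂ)).im
      = (2*π)⁻¹ * ∫ s in (0:ℝ)..(2*π), ρ s * (-2 * Complex.arg (1 - z / circleMap 0 R s)) := by
    rw [hL, ← Complex.ofReal_inv, Complex.im_ofReal_mul, hXim]
  -- Step F : the bound
  rw [hLim, abs_mul, abs_of_pos (by positivity : (0:ℝ) < (2*π)⁻¹)]
  have hargbound : ∀ s : ℝ, |Complex.arg (1 - z / circleMap 0 R s)| ≤ Real.arcsin c := by
    intro s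
    exact arg_one_sub_le hc0 hc1 (le_of_eq (habszζ s))
  have hint1 : IntervalIntegrable
      (fun s => |ρ s * (-2 * Complex.arg (1 - z / circleMap 0 R s))|)
      MeasureTheory.volume 0 (2*π) :=
    ((hcontρ.mul (continuous_const.mul hargcont)).abs).intervalIntegrable 0 (2*π)
  have hint2 : IntervalIntegrable (fun s => ρ s * (2 * Real.arcsin c))
      MeasureTheory.volume 0 (2*π) :=
    (hcontρ.mul continuous_const).intervalIntegrable 0 (2*π)
  calc (2*π)⁻¹ * |∫ s in (0:ℝ)..(2*π), ρ s * (-2 * Complex.arg (1 - z / circleMap 0 R s))|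
      ≤ (2*π)⁻¹ * ∫ s in (0:ℝ)..(2*π), |ρ s * (-2 * Complex.arg (1 - z / circleMap 0 R s))| := by
        apply mul_le_mul_of_nonneg_left _ (by positivity)
        exact intervalIntegral.abs_integral_le_integral_abs h2π
    _ ≤ (2*π)⁻¹ * ∫ s in (0:ℝ)..(2*π), ρ s * (2 * Real.arcsin c) := by
        apply mul_le_mul_of_nonneg_left _ (by positivity)
        apply intervalIntegral.integral_mono_on h2π hint1 hint2
        intro s _
        rw [abs_mul, _root_.abs_of_nonneg (hρpos s)]
        apply mul_le_mul_of_nonneg_left _ (hρpos s)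
        rw [abs_mul]
        calc |(-2:ℝ)| * |Complex.arg (1 - z / circleMap 0 R s)|
            = 2 * |Complex.arg (1 - z / circleMap 0 R s)| := by norm_num
          _ ≤ 2 * Real.arcsin c := by
              apply mul_le_mul_of_nonneg_left (hargbound s) (by norm_num)
    _ = (2*π)⁻¹ * ((2*π) * (2 * Real.arcsin c)) := by
        rw [intervalIntegral.integral_mul_const, hmass]
    _ = 2 * Real.arcsin c := by
        field_simp

/-- Rotation theorem for convex functions: if `φ` is normalized convex univalent
on the unit disk, then `|arg φ'(z)| ≤ 2 arcsin |z|`. -/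
theorem stmt_12 (φ : ℂ → ℂ)
    (hφ : DifferentiableOn ℂ φ (ball (0:ℂ) 1))
    (hinj : Set.InjOn φ (ball (0:ℂ) 1))
    (h0 : φ 0 = 0) (h1 : deriv φ 0 = 1)
    (hconv : ∀ z ∈ ball (0:ℂ) 1,
      (0 : ℝ) < (1 + z * deriv (deriv φ) z / deriv φ z).re) :
    ∀ z ∈ ball (0:ℂ) 1,
      |Complex.arg (deriv φ z)| ≤ 2 * Real.arcsin (‖z‖) := by
  intro z hz
  set f : ℂ → ℂ := deriv φ with hfdef
  have hφa : AnalyticOnNhd ℂ φ (ball (0:ℂ) 1) := hφ.analyticOnNhd isOpen_ball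
  have hfa : AnalyticOnNhd ℂ f (ball (0:ℂ) 1) := hφa.deriv
  have hne : ∀ w ∈ ball (0:ℂ) 1, f w ≠ 0 := aux_ne_zero f hfa h1 hconv
  set p : ℂ → ℂ := fun w => 1 + w * deriv f w / f w with hpdef
  have hp : DifferentiableOn ℂ p (ball (0:ℂ) 1) := by
    apply DifferentiableOn.const_add
    apply DifferentiableOn.div
    · exact differentiableOn_id.mul (hfa.deriv.differentiableOn)
    · exact hfa.differentiableOn
    · exact hne
  have hp0 : p 0 = 1 := by simp [hpdef]
  have hre0 : ∀ ζ ∈ ball (0:ℂ) 1, 0 ≤ (p ζ).re := fun ζ h => (hconv ζ h).le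
  set L : ℂ := ∫ t in (0:ℝ)..1, z * deriv f ((t:ℂ)*z) / f ((t:ℂ)*z) with hLdef
  have hexp : Complex.exp L = f z := aux_exp_eq f hfa h1 hne hz
  have hLeq : L = ∫ t in (0:ℝ)..1, (p ((t:ℂ)*z) - 1) / (t:ℂ) := by
    rw [hLdef, intervalIntegral.integral_of_le zero_le_one,
      intervalIntegral.integral_of_le zero_le_one]
    apply MeasureTheory.setIntegral_congr_fun measurableSet_Ioc
    intro t ht
    have htne : (t:ℂ) ≠ 0 := by exact_mod_cast ne_of_gt ht.1
    have htz : ((t:ℂ)*z) ∈ ball (0:ℂ) 1 := by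
      rw [mem_ball_zero_iff] at hz ⊢
      rw [norm_mul, Complex.norm_real, Real.norm_eq_abs]
      calc |t| * ‖z‖ ≤ 1 * ‖z‖ := by
            apply mul_le_mul_of_nonneg_right _ (norm_nonneg z)
            rw [abs_le]; exact ⟨by linarith [ht.1], ht.2⟩
        _ = ‖z‖ := one_mul _
        _ < 1 := hz
    have hfne : f ((t:ℂ)*z) ≠ 0 := hne _ htz
    show z * deriv f ((t:ℂ)*z) / f ((t:ℂ)*z) = (p ((t:ℂ)*z) - 1) / (t:ℂ)
    rw [hpdef]
    simp only [add_sub_cancel_left]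
    field_simp
  -- the bound for each admissible R
  have hball : ‖z‖ < 1 := by
    rw [mem_ball_zero_iff] at hz; exact hz
  have hRbound : ∀ R : ℝ, ‖z‖ < R → R < 1 →
      |Complex.arg (f z)| ≤ 2 * Real.arcsin (‖z‖ / R) := by
    intro R hzR hR1
    have hR0 : 0 < R := lt_of_le_of_lt (norm_nonneg z) hzR
    have hbound := aux_im_bound p hp hp0 hre0 hR1 hzR
    rw [← hLeq] at hbound
    have hLpi : |L.im| < π := by
      have h1' : Real.arcsin (‖z‖ / R) < π/2 :=
        Real.arcsin_lt_pi_div_two.2 ((div_lt_one hR0).2 hzR)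
      calc |L.im| ≤ 2 * Real.arcsin (‖z‖ / R) := hbound
        _ < 2 * (π/2) := by linarith
        _ = π := by ring
    have harg : Complex.arg (f z) = L.im := by
      rw [← hexp]
      have hlog : Complex.log (Complex.exp L) = L :=
        Complex.log_exp (by have := abs_lt.1 hLpi; linarith)
          (by have := abs_lt.1 hLpi; linarith)
      rw [← Complex.log_im (Complex.exp L), hlog]
    rw [harg]
    exact hbound
  -- take R → 1⁻
  have htends : Tendsto (fun R : ℝ => 2 * Real.arcsin (‖z‖ / R))
      (𝓝[<] (1:ℝ)) (𝓝 (2 * Real.arcsin (‖z‖))) := by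
    have hcont : ContinuousAt (fun R : ℝ => 2 * Real.arcsin (‖z‖ / R)) 1 := by
      apply ContinuousAt.mul continuousAt_const
      apply Real.continuous_arcsin.continuousAt.comp
      exact (continuousAt_const.div continuousAt_id one_ne_zero)
    have := hcont.tendsto
    simp only [div_one] at this
    exact this.mono_left nhdsWithin_le_nhds
  have hev : ∀ᶠ R in 𝓝[<] (1:ℝ), |Complex.arg (f z)| ≤ 2 * Real.arcsin (‖z‖ / R) := by
    filter_upwards [Ioo_mem_nhdsLT_of_mem ⟨hball, le_refl (1:ℝ)⟩] with R hR
    exact hRbound R hR.1 hR.2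
  exact ge_of_tendsto htends hev
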